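/- (Composition of Gaussian tradeoffs.) If M₁ is μ₁-GDP and M₂ is μ₂-GDP and both are (possibly adaptively composed) Gaussian mechanisms with independent noise acting on queries f₁, f₂, then the composed mechanism releasing (f₁(x) + N(0, σ₁²), f₂(x) + N(0, σ₂²)), with μᵢ = Δᵢ/σᵢ, satisfies μ-GDP with μ = √(μ₁² + μ₂²). -/

import Mathlib

open MeasureTheory ProbabilityTheory Real Set

/-- Standard normal CDF. -/
noncomputable def Phi (x : ℝ) : ℝ := ((gaussianReal 0 1) (Set.Iic x)).toReal

/-- Inverse of the standard normal CDF (on (0,1)). -/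
noncomputable def PhiInv (p : ℝ) : ℝ := sInf {x : ℝ | p ≤ Phi x}

/-- Gaussian tradeoff function `G_μ`, extended by `G_μ(0)=1`, `G_μ(1)=0`. -/
noncomputable def Gmu (μ α : ℝ) : ℝ :=
  if α ≤ 0 then 1 else if 1 ≤ α then 0 else Phi (PhiInv (1 - α) - μ)

/-- Optimal hypothesis-testing tradeoff function: minimal type-II error over
randomized tests with type-I error at most `α`. -/
noncomputable def tradeoff {Ω : Type*} [MeasurableSpace Ω] (P Q : Measure Ω) (α : ℝ) : ℝ :=
  sInf { b : ℝ | ∃ φ : Ω → ℝ, Measurable φ ∧ (∀ ω, φ ω ∈ Set.Icc (0:ℝ) 1) ∧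
    (∫ ω, φ ω ∂P) ≤ α ∧ b = 1 - ∫ ω, φ ω ∂Q }

/-- Rényi divergence of order `a > 1`. -/
noncomputable def renyiDiv {Ω : Type*} [MeasurableSpace Ω] (a : ℝ) (P Q : Measure Ω) : ℝ :=
  (a - 1)⁻¹ * Real.log (∫ ω, ((Measure.rnDeriv P Q ω).toReal) ^ a ∂Q)

/-- `(ε,δ)`-differential privacy. -/
def IsDP {X Ω : Type*} [MeasurableSpace Ω] (M : X → Measure Ω) (Neighbor : X → X → Prop)
    (ε δ : ℝ) : Prop :=
  ∀ x x', Neighbor x x' → ∀ S : Set Ω, MeasurableSet S →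
    ((M x) S).toReal ≤ Real.exp ε * ((M x') S).toReal + δ

/-- `ρ`-zero-concentrated differential privacy. -/
def IsZCDP {X Ω : Type*} [MeasurableSpace Ω] (M : X → Measure Ω) (Neighbor : X → X → Prop)
    (ρ : ℝ) : Prop :=
  ∀ x x', Neighbor x x' → ∀ a : ℝ, 1 < a → renyiDiv a (M x) (M x') ≤ ρ * a

/-- `μ`-Gaussian differential privacy. -/
def IsGDP {X Ω : Type*} [MeasurableSpace Ω] (M : X → Measure Ω) (Neighbor : X → X → Prop)
    (μ : ℝ) : Prop :=
  ∀ x x', Neighbor x x' → ∀ α ∈ Set.Icc (0:ℝ) 1, Gmu μ α ≤ tradeoff (M x) (M x') α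

open scoped NNReal ENNReal

section Aux

lemma Phi_nonneg (x : ℝ) : 0 ≤ Phi x := ENNReal.toReal_nonneg

lemma Phi_le_one (x : ℝ) : Phi x ≤ 1 := by
  rw [Phi, ← ENNReal.toReal_one]
  exact ENNReal.toReal_mono ENNReal.one_ne_top prob_le_one

lemma gaussianPDFReal_std_le_one (x : ℝ) : gaussianPDFReal 0 1 x ≤ 1 := by
  rw [gaussianPDFReal]
  have h1 : Real.exp (-(x - 0) ^ 2 / (2 * ((1:ℝ≥0):ℝ))) ≤ 1 := by
    rw [Real.exp_le_one_iff]
    have h : (0:ℝ) ≤ (x - 0)^2 := sq_nonneg _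
    have h2 : (0:ℝ) < 2 * ((1:ℝ≥0):ℝ) := by norm_num
    rw [div_nonpos_iff]
    right; constructor <;> nlinarith
  have h2 : (Real.sqrt (2 * π * ((1:ℝ≥0):ℝ)))⁻¹ ≤ 1 := by
    rw [inv_le_one_iff₀]
    right
    rw [show (1:ℝ) = Real.sqrt 1 by simp]
    apply Real.sqrt_le_sqrt
    push_cast
    nlinarith [Real.pi_gt_three]
  calc (Real.sqrt (2 * π * ((1:ℝ≥0):ℝ)))⁻¹ * Real.exp (-(x - 0) ^ 2 / (2 * ((1:ℝ≥0):ℝ)))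
      ≤ 1 * 1 := by
        apply mul_le_mul h2 h1 (Real.exp_nonneg _) zero_le_one
    _ = 1 := by norm_num

lemma Phi_add_Ioc {a b : ℝ} (hab : a ≤ b) :
    Phi b = Phi a + (∫ x in Ioc a b, gaussianPDFReal 0 1 x) := by
  have hIoc : ((gaussianReal 0 1) (Ioc a b)).toReal = ∫ x in Ioc a b, gaussianPDFReal 0 1 x := by
    rw [gaussianReal_apply_eq_integral 0 one_ne_zero,
      ENNReal.toReal_ofReal (setIntegral_nonneg measurableSet_Ioc
        fun x _ => gaussianPDFReal_nonneg 0 1 x)]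
  have hunion : Iic a ∪ Ioc a b = Iic b := Set.Iic_union_Ioc_eq_Iic hab
  have hdisj : Disjoint (Iic a) (Ioc a b) := by
    rw [Set.disjoint_left]; rintro x hx ⟨h1, h2⟩; exact absurd hx (not_le.mpr h1)
  have := measure_union (μ := gaussianReal 0 1) hdisj measurableSet_Ioc
  rw [hunion] at this
  rw [Phi, Phi, this, ENNReal.toReal_add (measure_ne_top _ _) (measure_ne_top _ _), hIoc]

lemma Phi_mono : Monotone Phi := by
  intro a b hab
  rw [Phi_add_Ioc hab]
  have : 0 ≤ ∫ x in Ioc a b, gaussianPDFReal 0 1 x :=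
    setIntegral_nonneg measurableSet_Ioc fun x _ => gaussianPDFReal_nonneg 0 1 x
  linarith

lemma Phi_sub_le {a b : ℝ} (hab : a ≤ b) : Phi b - Phi a ≤ b - a := by
  rw [Phi_add_Ioc hab]
  have h1 : (∫ x in Ioc a b, gaussianPDFReal 0 1 x) ≤ ∫ _x in Ioc a b, (1:ℝ) := by
    apply setIntegral_mono_on
    · exact (integrable_gaussianPDFReal 0 1).integrableOn
    · exact (integrableOn_const_iff).mpr (Or.inr (by rw [Real.volume_Ioc]; exact ENNReal.ofReal_lt_top))
    · exact measurableSet_Ioc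
    · exact fun x _ => gaussianPDFReal_std_le_one x
  have h2 : (∫ _x in Ioc a b, (1:ℝ)) = b - a := by
    simp [Real.volume_Ioc, ENNReal.toReal_ofReal (sub_nonneg.mpr hab), hab]
  linarith

lemma Phi_continuous : Continuous Phi := by
  have : LipschitzWith 1 Phi := by
    apply LipschitzWith.of_dist_le_mul
    intro x y
    rw [Real.dist_eq, Real.dist_eq, NNReal.coe_one, one_mul]
    rcases le_total x y with h | h
    · rw [abs_sub_comm (Phi x), abs_sub_comm x, abs_of_nonneg (sub_nonneg.mpr (Phi_mono h)),
        abs_of_nonneg (sub_nonneg.mpr h)]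
      exact Phi_sub_le h
    · rw [abs_of_nonneg (sub_nonneg.mpr (Phi_mono h)), abs_of_nonneg (sub_nonneg.mpr h)]
      exact Phi_sub_le h
  exact this.continuous

lemma Phi_strictMono : StrictMono Phi := by
  intro a b hab
  rw [Phi_add_Ioc hab.le, lt_add_iff_pos_right]
  rw [setIntegral_pos_iff_support_of_nonneg_ae]
  · have : (Function.support fun x => gaussianPDFReal 0 1 x) = univ := by
      ext x; simp [Function.mem_support, (gaussianPDFReal_pos 0 1 x one_ne_zero).ne']
    rw [this, Set.univ_inter, Real.volume_Ioc]
    simp [hab]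
  · exact Filter.Eventually.of_forall fun x => gaussianPDFReal_nonneg 0 1 x
  · exact (integrable_gaussianPDFReal 0 1).integrableOn

lemma Phi_pos (x : ℝ) : 0 < Phi x :=
  lt_of_le_of_lt (Phi_nonneg (x - 1)) (Phi_strictMono (by linarith))

lemma Phi_lt_one (x : ℝ) : Phi x < 1 :=
  lt_of_lt_of_le (Phi_strictMono (show x < x + 1 by linarith)) (Phi_le_one (x + 1))

lemma Phi_tendsto_atTop : Filter.Tendsto Phi Filter.atTop (nhds 1) := by
  have h := tendsto_measure_Iic_atTop (gaussianReal 0 1)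
  rw [measure_univ] at h
  have := (ENNReal.tendsto_toReal ENNReal.one_ne_top).comp h
  exact this

lemma Phi_tendsto_atBot : Filter.Tendsto Phi Filter.atBot (nhds 0) := by
  have h : Filter.Tendsto (fun x => (gaussianReal 0 1) (Iic x)) Filter.atBot
      (nhds ((gaussianReal 0 1) (⋂ i : ℝ, Iic i))) := by
    apply tendsto_measure_iInter_atBot
    · exact fun i => measurableSet_Iic.nullMeasurableSet
    · exact fun i j hij => Iic_subset_Iic.mpr hij
    · exact ⟨0, measure_ne_top _ _⟩
  have hempty : (⋂ i : ℝ, Iic i) = ∅ := by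
    ext x; simp only [mem_iInter, mem_Iic, mem_empty_iff_false, iff_false, not_forall]
    exact ⟨x - 1, by linarith⟩
  rw [hempty, measure_empty] at h
  have := (ENNReal.tendsto_toReal ENNReal.zero_ne_top).comp h
  exact this

lemma exists_Phi_eq {p : ℝ} (h0 : 0 < p) (h1 : p < 1) : ∃ x, Phi x = p := by
  obtain ⟨a, ha⟩ : ∃ a, Phi a < p := by
    have := Phi_tendsto_atBot.eventually_lt_const h0
    exact this.exists
  obtain ⟨b, hb⟩ : ∃ b, p < Phi b := by
    have := Phi_tendsto_atTop.eventually_const_lt h1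
    exact this.exists
  have hab : a ≤ b := by
    by_contra h
    exact absurd (Phi_mono (le_of_not_ge h)) (not_le.mpr (lt_trans ha hb))
  obtain ⟨x, _, hx⟩ := intermediate_value_Icc hab Phi_continuous.continuousOn
    ⟨ha.le, hb.le⟩
  exact ⟨x, hx⟩

lemma Phi_PhiInv {p : ℝ} (h0 : 0 < p) (h1 : p < 1) : Phi (PhiInv p) = p := by
  obtain ⟨x₀, hx₀⟩ := exists_Phi_eq h0 h1
  have hset : {x : ℝ | p ≤ Phi x} = Ici x₀ := by
    ext y
    simp only [mem_setOf_eq, mem_Ici, ← hx₀]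
    exact ⟨fun h => (Phi_strictMono.le_iff_le).mp h, fun h => Phi_mono h⟩
  rw [PhiInv, hset, csInf_Ici, hx₀]


lemma gaussianReal_eq_map (m : ℝ) (v : ℝ≥0) (hv : v ≠ 0) :
    gaussianReal m v = (gaussianReal 0 1).map (fun x => Real.sqrt v * x + m) := by
  have h1 : (gaussianReal 0 1).map (fun x => Real.sqrt v * x) = gaussianReal 0 v := by
    rw [show (fun x => Real.sqrt v * x) = (fun x => Real.sqrt v * x) from rfl]
    have := gaussianReal_map_const_mul (μ := 0) (v := 1) (Real.sqrt v)
    rw [mul_zero] at this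
    convert this using 2
    ext
    simp [Real.sq_sqrt (NNReal.coe_nonneg v)]
  have h2 : (fun x => Real.sqrt v * x + m) = (fun y => y + m) ∘ (fun x => Real.sqrt v * x) := rfl
  rw [h2, ← Measure.map_map (measurable_id'.add_const m) (measurable_const_mul _), h1,
    gaussianReal_map_add_const m, zero_add]

lemma gaussianReal_Iic (m : ℝ) (v : ℝ≥0) (hv : v ≠ 0) (t : ℝ) :
    ((gaussianReal m v) (Iic t)).toReal = Phi ((t - m) / Real.sqrt v) := by
  have hvpos : (0:ℝ) < Real.sqrt v := Real.sqrt_pos.mpr (by positivity)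
  rw [gaussianReal_eq_map m v hv,
    Measure.map_apply (by fun_prop) measurableSet_Iic]
  congr 2
  ext x
  simp only [mem_preimage, mem_Iic]
  rw [le_div_iff₀ hvpos]
  constructor <;> intro h <;> nlinarith

lemma gaussianReal_Ioi (m : ℝ) (v : ℝ≥0) (hv : v ≠ 0) (t : ℝ) :
    ((gaussianReal m v) (Ioi t)).toReal = 1 - Phi ((t - m) / Real.sqrt v) := by
  have h : (Ioi t) = (Iic t)ᶜ := by ext y; simp
  rw [h, measure_compl measurableSet_Iic (measure_ne_top _ _), measure_univ,
    ENNReal.toReal_sub_of_le prob_le_one ENNReal.one_ne_top, ENNReal.toReal_one,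
    gaussianReal_Iic m v hv t]


lemma gaussianPDFReal_le (m : ℝ) (v : ℝ≥0) (x : ℝ) :
    gaussianPDFReal m v x ≤ (Real.sqrt (2 * π * v))⁻¹ := by
  rw [gaussianPDFReal]
  have h1 : Real.exp (-(x - m) ^ 2 / (2 * v)) ≤ 1 := by
    rw [Real.exp_le_one_iff, div_nonpos_iff]
    right
    constructor
    · nlinarith [sq_nonneg (x - m)]
    · positivity
  have h2 : (0:ℝ) ≤ (Real.sqrt (2 * π * v))⁻¹ := by positivity
  nlinarith

lemma conv_real (m₁ m₂ : ℝ) (v₁ v₂ : ℝ≥0) (h₁ : v₁ ≠ 0) (h₂ : v₂ ≠ 0) (u : ℝ) :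
    (∫ x, gaussianPDFReal m₁ v₁ x * gaussianPDFReal m₂ v₂ (u - x))
      = gaussianPDFReal (m₁ + m₂) (v₁ + v₂) u := by
  have hp : (0:ℝ) < v₁ := by positivity
  have hq : (0:ℝ) < v₂ := by positivity
  set p : ℝ := (v₁ : ℝ) with hpdef
  set q : ℝ := (v₂ : ℝ) with hqdef
  have hpq : (0:ℝ) < p + q := by positivity
  set w : ℝ := p * q / (p + q) with hwdef
  have hw : 0 < w := by positivity
  set c : ℝ := (m₁ * q + (u - m₂) * p) / (p + q) with hcdef
  set w' : ℝ≥0 := w.toNNReal with hw'def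
  have hw'c : (w' : ℝ) = w := Real.coe_toNNReal w hw.le
  have hw'ne : w' ≠ 0 := by
    simp only [hw'def, ne_eq, Real.toNNReal_eq_zero, not_le]
    exact hw
  -- pointwise identity
  have hpoint : ∀ x, gaussianPDFReal m₁ v₁ x * gaussianPDFReal m₂ v₂ (u - x)
      = ((Real.sqrt (2 * π * p))⁻¹ * (Real.sqrt (2 * π * q))⁻¹ * Real.sqrt (2 * π * w)
          * Real.exp (-(u - (m₁ + m₂))^2 / (2 * (p + q)))) * gaussianPDFReal c w' x := by
    intro x
    rw [gaussianPDFReal, gaussianPDFReal, gaussianPDFReal, hw'c]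
    rw [show ((u - x) - m₂) = (u - x - m₂) by ring]
    have hexp : Real.exp (-(x - m₁) ^ 2 / (2 * p)) * Real.exp (-(u - x - m₂) ^ 2 / (2 * q))
        = Real.exp (-(u - (m₁ + m₂))^2 / (2 * (p + q))) * Real.exp (-(x - c) ^ 2 / (2 * w)) := by
      rw [← Real.exp_add, ← Real.exp_add]
      congr 1
      rw [hcdef, hwdef]
      field_simp
      ring
    have hsqrtw : Real.sqrt (2 * π * w) * (Real.sqrt (2 * π * w))⁻¹ = 1 := by
      rw [mul_inv_cancel₀]
      positivity
    calc (Real.sqrt (2 * π * p))⁻¹ * Real.exp (-(x - m₁) ^ 2 / (2 * p))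
          * ((Real.sqrt (2 * π * q))⁻¹ * Real.exp (-(u - x - m₂) ^ 2 / (2 * q)))
        = (Real.sqrt (2 * π * p))⁻¹ * (Real.sqrt (2 * π * q))⁻¹
            * (Real.exp (-(x - m₁) ^ 2 / (2 * p)) * Real.exp (-(u - x - m₂) ^ 2 / (2 * q))) := by
          ring
      _ = (Real.sqrt (2 * π * p))⁻¹ * (Real.sqrt (2 * π * q))⁻¹
            * (Real.exp (-(u - (m₁ + m₂))^2 / (2 * (p + q))) * Real.exp (-(x - c) ^ 2 / (2 * w))) := by
          rw [hexp]
      _ = ((Real.sqrt (2 * π * p))⁻¹ * (Real.sqrt (2 * π * q))⁻¹ * Real.sqrt (2 * π * w)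
            * Real.exp (-(u - (m₁ + m₂))^2 / (2 * (p + q))))
          * ((Real.sqrt (2 * π * w))⁻¹ * Real.exp (-(x - c) ^ 2 / (2 * w))) := by
          have hS : Real.sqrt (2 * π * w) ≠ 0 := by positivity
          field_simp
  have hint : (∫ x, gaussianPDFReal m₁ v₁ x * gaussianPDFReal m₂ v₂ (u - x))
      = ((Real.sqrt (2 * π * p))⁻¹ * (Real.sqrt (2 * π * q))⁻¹ * Real.sqrt (2 * π * w)
          * Real.exp (-(u - (m₁ + m₂))^2 / (2 * (p + q)))) := by
    calc (∫ x, gaussianPDFReal m₁ v₁ x * gaussianPDFReal m₂ v₂ (u - x))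
        = ∫ x, ((Real.sqrt (2 * π * p))⁻¹ * (Real.sqrt (2 * π * q))⁻¹ * Real.sqrt (2 * π * w)
            * Real.exp (-(u - (m₁ + m₂))^2 / (2 * (p + q)))) * gaussianPDFReal c w' x := by
          congr 1; ext x; exact hpoint x
      _ = ((Real.sqrt (2 * π * p))⁻¹ * (Real.sqrt (2 * π * q))⁻¹ * Real.sqrt (2 * π * w)
            * Real.exp (-(u - (m₁ + m₂))^2 / (2 * (p + q)))) * ∫ x, gaussianPDFReal c w' x := by
          rw [integral_const_mul]
      _ = _ := by rw [integral_gaussianPDFReal_eq_one c hw'ne, mul_one]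
  rw [hint, gaussianPDFReal]
  have hcoe : ((v₁ + v₂ : ℝ≥0) : ℝ) = p + q := by push_cast; rfl
  rw [hcoe]
  congr 1
  -- constants
  have hkey : Real.sqrt (2 * π * w) * Real.sqrt (2 * π * (p + q))
      = Real.sqrt (2 * π * p) * Real.sqrt (2 * π * q) := by
    rw [← Real.sqrt_mul (by positivity), ← Real.sqrt_mul (by positivity)]
    congr 1
    rw [hwdef]
    field_simp
  have h1 : Real.sqrt (2 * π * p) ≠ 0 := by positivity
  have h2' : Real.sqrt (2 * π * q) ≠ 0 := by positivity
  have h3 : Real.sqrt (2 * π * (p + q)) ≠ 0 := by positivity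
  have hW : Real.sqrt (2 * π * w) = Real.sqrt (2 * π * p) * Real.sqrt (2 * π * q)
      / Real.sqrt (2 * π * (p + q)) := by
    rw [eq_div_iff h3]; exact hkey
  rw [hW]
  have e : (Real.sqrt (2 * π * p))⁻¹ * (Real.sqrt (2 * π * q))⁻¹
      * (Real.sqrt (2 * π * p) * Real.sqrt (2 * π * q) / Real.sqrt (2 * π * (p + q)))
      = ((Real.sqrt (2 * π * p))⁻¹ * Real.sqrt (2 * π * p))
        * (((Real.sqrt (2 * π * q))⁻¹ * Real.sqrt (2 * π * q)) / Real.sqrt (2 * π * (p + q))) := by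
    ring
  rw [e, inv_mul_cancel₀ h1, inv_mul_cancel₀ h2', one_mul, one_div]


lemma conv_integrable (m₁ m₂ : ℝ) (v₁ v₂ : ℝ≥0) (u : ℝ) :
    Integrable (fun x => gaussianPDFReal m₁ v₁ x * gaussianPDFReal m₂ v₂ (u - x)) := by
  apply Integrable.mono' ((integrable_gaussianPDFReal m₁ v₁).const_mul (Real.sqrt (2 * π * v₂))⁻¹)
  · exact ((measurable_gaussianPDFReal m₁ v₁).mul
      ((measurable_gaussianPDFReal m₂ v₂).comp (measurable_const.sub measurable_id))).aestronglyMeasurable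
  · apply Filter.Eventually.of_forall
    intro x
    rw [Real.norm_eq_abs, abs_of_nonneg (mul_nonneg (gaussianPDFReal_nonneg _ _ _)
      (gaussianPDFReal_nonneg _ _ _))]
    rw [mul_comm ((Real.sqrt (2 * π * v₂))⁻¹)]
    exact mul_le_mul_of_nonneg_left (gaussianPDFReal_le m₂ v₂ (u - x))
      (gaussianPDFReal_nonneg _ _ _)

lemma conv_lintegral (m₁ m₂ : ℝ) (v₁ v₂ : ℝ≥0) (h₁ : v₁ ≠ 0) (h₂ : v₂ ≠ 0) (u : ℝ) :
    (∫⁻ x, gaussianPDF m₁ v₁ x * gaussianPDF m₂ v₂ (u - x))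
      = gaussianPDF (m₁ + m₂) (v₁ + v₂) u := by
  have h : ∀ x, gaussianPDF m₁ v₁ x * gaussianPDF m₂ v₂ (u - x)
      = ENNReal.ofReal (gaussianPDFReal m₁ v₁ x * gaussianPDFReal m₂ v₂ (u - x)) := by
    intro x
    rw [gaussianPDF, gaussianPDF, ← ENNReal.ofReal_mul (gaussianPDFReal_nonneg _ _ _)]
  simp_rw [h]
  rw [← ofReal_integral_eq_lintegral_ofReal (conv_integrable m₁ m₂ v₁ v₂ u)
    (Filter.Eventually.of_forall fun x => mul_nonneg (gaussianPDFReal_nonneg _ _ _)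
      (gaussianPDFReal_nonneg _ _ _)),
    conv_real m₁ m₂ v₁ v₂ h₁ h₂ u, gaussianPDF]

lemma prod_withDensity {μ ν : Measure ℝ} [SigmaFinite μ] [SigmaFinite ν]
    {f g : ℝ → ℝ≥0∞} (hf : Measurable f) (hg : Measurable g) :
    (μ.withDensity f).prod (ν.withDensity g)
      = (μ.prod ν).withDensity (fun p => f p.1 * g p.2) := by
  have hind : Measurable (fun p : ℝ × ℝ => (0:ℝ≥0∞)) := measurable_const
  ext s hs
  have hsind : Measurable (s.indicator (fun p : ℝ × ℝ => g p.2)) :=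
    (hg.comp measurable_snd).indicator hs
  have hF : Measurable (fun x => ∫⁻ y, s.indicator (fun p : ℝ × ℝ => g p.2) (x, y) ∂ν) :=
    Measurable.lintegral_prod_right' hsind
  have hLHS : ((μ.withDensity f).prod (ν.withDensity g)) s
      = ∫⁻ x, f x * ∫⁻ y, s.indicator (fun p : ℝ × ℝ => g p.2) (x, y) ∂ν ∂μ := by
    rw [Measure.prod_apply hs]
    have hsec : ∀ x, (ν.withDensity g) (Prod.mk x ⁻¹' s)
        = ∫⁻ y, s.indicator (fun p : ℝ × ℝ => g p.2) (x, y) ∂ν := by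
      intro x
      rw [withDensity_apply _ (measurable_prodMk_left hs), ← lintegral_indicator (measurable_prodMk_left hs) _]
      refine lintegral_congr fun y => ?_
      by_cases hy : (x, y) ∈ s
      · simp [Set.indicator, hy]
      · simp [Set.indicator, hy]
    simp_rw [hsec]
    rw [lintegral_withDensity_eq_lintegral_mul μ hf hF]
    rfl
  have hRHS : ((μ.prod ν).withDensity (fun p => f p.1 * g p.2)) s
      = ∫⁻ x, f x * ∫⁻ y, s.indicator (fun p : ℝ × ℝ => g p.2) (x, y) ∂ν ∂μ := by
    have hmeas : Measurable (fun p : ℝ × ℝ => f p.1 * g p.2) :=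
      (hf.comp measurable_fst).mul (hg.comp measurable_snd)
    rw [withDensity_apply _ hs, ← lintegral_indicator hs _,
      MeasureTheory.lintegral_prod _ (hmeas.indicator hs).aemeasurable]
    congr 1
    ext x
    rw [← lintegral_const_mul (f x) (show Measurable (fun y => s.indicator (fun p : ℝ × ℝ => g p.2) (x, y)) from hsind.comp (measurable_prodMk_left))]
    refine lintegral_congr fun y => ?_
    by_cases hy : (x, y) ∈ s
    · simp [Set.indicator, hy]
    · simp [Set.indicator, hy]
  rw [hLHS, hRHS]

lemma gaussian_sum (m₁ m₂ : ℝ) (v₁ v₂ : ℝ≥0) :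
    ((gaussianReal m₁ v₁).prod (gaussianReal m₂ v₂)).map (fun p : ℝ × ℝ => p.1 + p.2)
      = gaussianReal (m₁ + m₂) (v₁ + v₂) := by
  have hadd : Measurable (fun p : ℝ × ℝ => p.1 + p.2) := measurable_fst.add measurable_snd
  by_cases h₁ : v₁ = 0
  · subst h₁
    rw [gaussianReal_zero_var, Measure.dirac_prod, Measure.map_map hadd measurable_prodMk_left]
    have : ((fun p : ℝ × ℝ => p.1 + p.2) ∘ Prod.mk m₁) = (fun x => m₁ + x) := rfl
    rw [this, gaussianReal_map_const_add, add_comm m₂ m₁, zero_add]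
  by_cases h₂ : v₂ = 0
  · subst h₂
    rw [gaussianReal_zero_var, Measure.prod_dirac, Measure.map_map hadd measurable_prodMk_right]
    have : ((fun p : ℝ × ℝ => p.1 + p.2) ∘ (fun x => (x, m₂))) = (fun x => x + m₂) := rfl
    rw [this, gaussianReal_map_add_const, add_zero]
  -- main case
  have hsum : v₁ + v₂ ≠ 0 := by
    intro h
    exact h₁ (add_eq_zero.mp h).1
  rw [gaussianReal_of_var_ne_zero _ h₁, gaussianReal_of_var_ne_zero _ h₂,
    gaussianReal_of_var_ne_zero _ hsum,
    _root_.prod_withDensity (measurable_gaussianPDF m₁ v₁) (measurable_gaussianPDF m₂ v₂)]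
  ext s hs
  rw [Measure.map_apply hadd hs, withDensity_apply _ (hadd hs), withDensity_apply _ hs,
    ← lintegral_indicator (hadd hs) _, ← lintegral_indicator hs _]
  have hmeas : Measurable (fun p : ℝ × ℝ => gaussianPDF m₁ v₁ p.1 * gaussianPDF m₂ v₂ p.2
      * s.indicator (fun _ => (1:ℝ≥0∞)) (p.1 + p.2)) := by
    apply Measurable.mul
    · exact ((measurable_gaussianPDF m₁ v₁).comp measurable_fst).mul
        ((measurable_gaussianPDF m₂ v₂).comp measurable_snd)
    · exact ((measurable_const.indicator hs).comp hadd)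
  have hstep1 : ∫⁻ p : ℝ × ℝ, ((fun p : ℝ × ℝ => p.1 + p.2) ⁻¹' s).indicator
        (fun p : ℝ × ℝ => gaussianPDF m₁ v₁ p.1 * gaussianPDF m₂ v₂ p.2) p
        ∂(volume.prod volume)
      = ∫⁻ x, ∫⁻ y, gaussianPDF m₁ v₁ x * gaussianPDF m₂ v₂ y
          * s.indicator (fun _ => (1:ℝ≥0∞)) (x + y) ∂volume ∂volume := by
    rw [show (fun p : ℝ × ℝ => ((fun p : ℝ × ℝ => p.1 + p.2) ⁻¹' s).indicator
        (fun p : ℝ × ℝ => gaussianPDF m₁ v₁ p.1 * gaussianPDF m₂ v₂ p.2) p)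
      = (fun p : ℝ × ℝ => gaussianPDF m₁ v₁ p.1 * gaussianPDF m₂ v₂ p.2
          * s.indicator (fun _ => (1:ℝ≥0∞)) (p.1 + p.2)) from ?_]
    · exact MeasureTheory.lintegral_prod _ hmeas.aemeasurable
    · ext p
      by_cases hp : p.1 + p.2 ∈ s
      · simp [Set.indicator, hp]
      · simp [Set.indicator, hp]
  rw [hstep1]
  -- shift inner integral
  have hshift : ∀ x, (∫⁻ y, gaussianPDF m₁ v₁ x * gaussianPDF m₂ v₂ y
        * s.indicator (fun _ => (1:ℝ≥0∞)) (x + y) ∂volume)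
      = ∫⁻ u, gaussianPDF m₁ v₁ x * gaussianPDF m₂ v₂ (u - x)
        * s.indicator (fun _ => (1:ℝ≥0∞)) u ∂volume := by
    intro x
    rw [← lintegral_add_right_eq_self (μ := (volume : Measure ℝ))
      (fun u => gaussianPDF m₁ v₁ x * gaussianPDF m₂ v₂ (u - x)
        * s.indicator (fun _ => (1:ℝ≥0∞)) u) x]
    refine lintegral_congr fun y => ?_
    simp [add_sub_cancel_right, add_comm]
  simp_rw [hshift]
  have hswap : (∫⁻ x, ∫⁻ u, gaussianPDF m₁ v₁ x * gaussianPDF m₂ v₂ (u - x)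
        * s.indicator (fun _ => (1:ℝ≥0∞)) u ∂volume ∂volume)
      = ∫⁻ u, ∫⁻ x, gaussianPDF m₁ v₁ x * gaussianPDF m₂ v₂ (u - x)
        * s.indicator (fun _ => (1:ℝ≥0∞)) u ∂volume ∂volume := by
    apply lintegral_lintegral_swap
    apply Measurable.aemeasurable
    apply Measurable.mul
    · exact ((measurable_gaussianPDF m₁ v₁).comp measurable_fst).mul
        ((measurable_gaussianPDF m₂ v₂).comp (measurable_snd.sub measurable_fst))
    · exact (measurable_const.indicator hs).comp measurable_snd
  rw [hswap]
  refine lintegral_congr fun u => ?_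
  have hpull : (∫⁻ x, gaussianPDF m₁ v₁ x * gaussianPDF m₂ v₂ (u - x)
        * s.indicator (fun _ => (1:ℝ≥0∞)) u ∂volume)
      = (∫⁻ x, gaussianPDF m₁ v₁ x * gaussianPDF m₂ v₂ (u - x) ∂volume)
        * s.indicator (fun _ => (1:ℝ≥0∞)) u := by
    have hfm : Measurable (fun x => gaussianPDF m₁ v₁ x * gaussianPDF m₂ v₂ (u - x)) :=
      (measurable_gaussianPDF m₁ v₁).mul
        ((measurable_gaussianPDF m₂ v₂).comp (measurable_const.sub measurable_id))
    rw [← lintegral_mul_const _ hfm]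
  rw [hpull, conv_lintegral m₁ m₂ v₁ v₂ h₁ h₂ u]
  by_cases hu : u ∈ s
  · simp [Set.indicator, hu]
  · simp [Set.indicator, hu]

lemma gaussian_linear (m₁ m₂ : ℝ) (v₁ v₂ : ℝ≥0) (a₁ a₂ : ℝ) :
    ((gaussianReal m₁ v₁).prod (gaussianReal m₂ v₂)).map (fun p : ℝ × ℝ => a₁ * p.1 + a₂ * p.2)
      = gaussianReal (a₁ * m₁ + a₂ * m₂)
          (⟨a₁^2, sq_nonneg _⟩ * v₁ + ⟨a₂^2, sq_nonneg _⟩ * v₂) := by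
  have hcomp : (fun p : ℝ × ℝ => a₁ * p.1 + a₂ * p.2)
      = (fun p : ℝ × ℝ => p.1 + p.2) ∘ (Prod.map (fun x => a₁ * x) (fun x => a₂ * x)) := rfl
  rw [hcomp, ← Measure.map_map (show Measurable (fun p : ℝ × ℝ => p.1 + p.2) from measurable_fst.add measurable_snd)
      ((measurable_const_mul a₁).prodMap (measurable_const_mul a₂)),
    ← Measure.map_prod_map _ _ (measurable_const_mul a₁) (measurable_const_mul a₂),
    gaussianReal_map_const_mul a₁, gaussianReal_map_const_mul a₂, gaussian_sum]
  rfl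

lemma ratio_meas (m m' : ℝ) (v : ℝ≥0) :
    Measurable (fun x : ℝ =>
      ENNReal.ofReal (Real.exp (((m' - m) * x + (m^2 - m'^2)/2) / (v:ℝ)))) := by
  apply Measurable.ennreal_ofReal
  exact Real.measurable_exp.comp (((measurable_const.mul measurable_id).add_const
    ((m^2 - m'^2)/2)).div_const _)

lemma gauss_ratio (m m' : ℝ) (v : ℝ≥0) (hv : v ≠ 0) :
    gaussianReal m' v = (gaussianReal m v).withDensity
      (fun x => ENNReal.ofReal (Real.exp (((m' - m) * x + (m^2 - m'^2)/2) / (v:ℝ)))) := by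
  have hvpos : (0:ℝ) < (v:ℝ) := by positivity
  have hmeas := ratio_meas m m' v
  rw [gaussianReal_of_var_ne_zero _ hv, gaussianReal_of_var_ne_zero _ hv,
    ← withDensity_mul _ (measurable_gaussianPDF m v) hmeas]
  congr 1
  funext x
  simp only [Pi.mul_apply, gaussianPDF]
  rw [← ENNReal.ofReal_mul (gaussianPDFReal_nonneg _ _ _)]
  congr 1
  rw [gaussianPDFReal, gaussianPDFReal,
    mul_assoc ((Real.sqrt (2 * π * (v:ℝ)))⁻¹), ← Real.exp_add]
  congr 2
  field_simp
  ring

end Aux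

set_option maxHeartbeats 1000000 in
/-- Composition of Gaussian mechanisms: releasing two independent Gaussian
measurements with per-query parameters `μᵢ = Δᵢ/σᵢ` is
`√(μ₁² + μ₂²)`-GDP. -/
theorem gaussian_composition_gdp {X : Type*} (f₁ f₂ : X → ℝ)
    (Neighbor : X → X → Prop) (σ₁ σ₂ Δ₁ Δ₂ : ℝ) (hσ₁ : 0 < σ₁) (hσ₂ : 0 < σ₂)
    (h₁ : ∀ x x', Neighbor x x' → |f₁ x - f₁ x'| ≤ Δ₁)
    (h₂ : ∀ x x', Neighbor x x' → |f₂ x - f₂ x'| ≤ Δ₂)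
    (M : X → Measure (ℝ × ℝ))
    (hM : ∀ x, M x = (gaussianReal (f₁ x) ((σ₁ ^ 2).toNNReal)).prod
                      (gaussianReal (f₂ x) ((σ₂ ^ 2).toNNReal))) :
    IsGDP M Neighbor (Real.sqrt ((Δ₁ / σ₁) ^ 2 + (Δ₂ / σ₂) ^ 2)) := by
  intro x x' hxx' α hα
  obtain ⟨hα0, hα1⟩ := hα
  set μr : ℝ := Real.sqrt ((Δ₁ / σ₁) ^ 2 + (Δ₂ / σ₂) ^ 2) with hμrdef
  have hμr0 : 0 ≤ μr := Real.sqrt_nonneg _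
  set m₁ := f₁ x with hm₁; set m₂ := f₂ x with hm₂
  set m₁' := f₁ x' with hm₁'; set m₂' := f₂ x' with hm₂'
  set v₁ : ℝ≥0 := (σ₁ ^ 2).toNNReal with hv₁def
  set v₂ : ℝ≥0 := (σ₂ ^ 2).toNNReal with hv₂def
  have hv₁c : (v₁:ℝ) = σ₁^2 := Real.coe_toNNReal _ (sq_nonneg σ₁)
  have hv₂c : (v₂:ℝ) = σ₂^2 := Real.coe_toNNReal _ (sq_nonneg σ₂)
  have hv₁ : v₁ ≠ 0 := by
    simp only [hv₁def, ne_eq, Real.toNNReal_eq_zero, not_le]; positivity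
  have hv₂ : v₂ ≠ 0 := by
    simp only [hv₂def, ne_eq, Real.toNNReal_eq_zero, not_le]; positivity
  set P : Measure (ℝ × ℝ) := (gaussianReal m₁ v₁).prod (gaussianReal m₂ v₂) with hPdef
  set Q : Measure (ℝ × ℝ) := (gaussianReal m₁' v₁).prod (gaussianReal m₂' v₂) with hQdef
  have hMx : M x = P := hM x
  have hMx' : M x' = Q := hM x'
  rw [hMx, hMx']
  -- log-likelihood ratio
  set ℓ : ℝ × ℝ → ℝ := fun ω =>
    ((m₁' - m₁) * ω.1 + (m₁^2 - m₁'^2)/2) / (v₁:ℝ)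
      + ((m₂' - m₂) * ω.2 + (m₂^2 - m₂'^2)/2) / (v₂:ℝ) with hℓdef
  have hℓmeas : Measurable ℓ := by
    apply Measurable.add
    · exact (((measurable_const.mul measurable_fst).add_const _).div_const _)
    · exact (((measurable_const.mul measurable_snd).add_const _).div_const _)
  have hexpmeas : Measurable (fun ω => rexp (ℓ ω)) := Real.measurable_exp.comp hℓmeas
  have hQP : Q = P.withDensity (fun ω => ENNReal.ofReal (rexp (ℓ ω))) := by
    rw [hQdef, gauss_ratio m₁ m₁' v₁ hv₁, gauss_ratio m₂ m₂' v₂ hv₂,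
      _root_.prod_withDensity (ratio_meas m₁ m₁' v₁) (ratio_meas m₂ m₂' v₂)]
    congr 1
    funext ω
    rw [← ENNReal.ofReal_mul (Real.exp_nonneg _), ← Real.exp_add]
  have hQac : Q ≪ P := by rw [hQP]; exact withDensity_absolutelyContinuous _ _
  -- integral over Q as weighted integral over P
  have hQgen : ∀ g : (ℝ × ℝ) → ℝ, ∫ ω, g ω ∂Q = ∫ ω, rexp (ℓ ω) * g ω ∂P := by
    intro g
    have hR : Measurable (fun ω => Real.toNNReal (rexp (ℓ ω))) :=
      measurable_real_toNNReal.comp hexpmeas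
    have h1 : Q = P.withDensity (fun ω => ((Real.toNNReal (rexp (ℓ ω)) : ℝ≥0) : ℝ≥0∞)) := hQP
    rw [h1, integral_withDensity_eq_integral_smul hR g]
    congr 1
    funext ω
    rw [NNReal.smul_def, Real.coe_toNNReal _ (Real.exp_nonneg _), smul_eq_mul]
  -- integrability
  have intExp : Integrable (fun ω => rexp (ℓ ω)) P := by
    have hlint : ∫⁻ ω, ENNReal.ofReal (rexp (ℓ ω)) ∂P = 1 := by
      have : ∫⁻ ω, ENNReal.ofReal (rexp (ℓ ω)) ∂P = Q univ := by
        rw [hQP, withDensity_apply _ MeasurableSet.univ, setLIntegral_univ]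
      rw [this, measure_univ]
    have := integrable_toReal_of_lintegral_ne_top
      (hexpmeas.ennreal_ofReal.aemeasurable) (by rw [hlint]; exact ENNReal.one_ne_top)
    refine this.congr (Filter.Eventually.of_forall fun ω => ?_)
    exact ENNReal.toReal_ofReal (Real.exp_nonneg _)
  have int01 : ∀ (g : (ℝ × ℝ) → ℝ), Measurable g → (∀ ω, g ω ∈ Icc (0:ℝ) 1) →
      ∀ (ν : Measure (ℝ × ℝ)), IsProbabilityMeasure ν → Integrable g ν := by
    intro g hg hg01 ν hν
    apply Integrable.mono' (integrable_const (1:ℝ)) hg.aestronglyMeasurable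
    apply Filter.Eventually.of_forall
    intro ω
    rw [Real.norm_eq_abs, abs_of_nonneg (hg01 ω).1]
    exact (hg01 ω).2
  have intExpBdd : ∀ (g : (ℝ × ℝ) → ℝ), Measurable g → (∀ ω, g ω ∈ Icc (0:ℝ) 1) →
      Integrable (fun ω => rexp (ℓ ω) * g ω) P := by
    intro g hg hg01
    apply Integrable.mono' intExp (hexpmeas.mul hg).aestronglyMeasurable
    apply Filter.Eventually.of_forall
    intro ω
    rw [Real.norm_eq_abs, Pi.mul_apply, abs_mul, abs_of_nonneg (Real.exp_nonneg _),
      abs_of_nonneg (hg01 ω).1]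
    calc rexp (ℓ ω) * g ω ≤ rexp (ℓ ω) * 1 :=
          mul_le_mul_of_nonneg_left (hg01 ω).2 (Real.exp_nonneg _)
      _ = rexp (ℓ ω) := mul_one _
  -- nonemptiness and the lower bound
  apply le_csInf
  · refine ⟨1, fun _ => 0, measurable_const, fun ω => ⟨le_refl 0, zero_le_one⟩, ?_, ?_⟩
    · rw [integral_zero]; exact hα0
    · rw [integral_zero]; norm_num
  rintro b ⟨φ, hφm, hφ01, hφP, rfl⟩
  have intφP : Integrable φ P := int01 φ hφm hφ01 P (by infer_instance)
  have intφQ : Integrable φ Q := int01 φ hφm hφ01 Q (by infer_instance)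
  have hφQ_le_one : ∫ ω, φ ω ∂Q ≤ 1 := by
    calc ∫ ω, φ ω ∂Q ≤ ∫ _ω, (1:ℝ) ∂Q :=
          integral_mono intφQ (integrable_const 1) fun ω => (hφ01 ω).2
      _ = 1 := by simp
  have hφQ_nonneg : 0 ≤ ∫ ω, φ ω ∂Q :=
    integral_nonneg fun ω => (hφ01 ω).1
  by_cases hcase1 : 1 ≤ α
  · have hGmu : Gmu μr α = 0 := by
      rw [Gmu]
      rw [if_neg (by linarith), if_pos hcase1]
    rw [hGmu]
    linarith only [hφQ_le_one]
  by_cases hcase0 : α ≤ 0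
  · have hGmu : Gmu μr α = 1 := by rw [Gmu, if_pos hcase0]
    rw [hGmu]
    have hφP0 : ∫ ω, φ ω ∂P = 0 :=
      le_antisymm (le_trans hφP hcase0) (integral_nonneg fun ω => (hφ01 ω).1)
    have hae : φ =ᵐ[P] 0 :=
      (integral_eq_zero_iff_of_nonneg (fun ω => (hφ01 ω).1) intφP).mp hφP0
    have haeQ : φ =ᵐ[Q] 0 := hQac.ae_le hae
    rw [integral_congr_ae haeQ]
    simp
  push_neg at hcase0 hcase1
  have hGmu : Gmu μr α = Phi (PhiInv (1 - α) - μr) := by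
    rw [Gmu, if_neg (by linarith), if_neg (by linarith)]
  rw [hGmu]
  set z : ℝ := PhiInv (1 - α) with hzdef
  have hz : Phi z = 1 - α := Phi_PhiInv (by linarith) (by linarith)
  by_cases hc : m₁' = m₁ ∧ m₂' = m₂
  · -- degenerate case : P = Q
    have hPQ : Q = P := by rw [hQdef, hPdef, hc.1, hc.2]
    have : ∫ ω, φ ω ∂Q ≤ α := by rw [hPQ]; exact hφP
    have hPhile : Phi (z - μr) ≤ Phi z := Phi_mono (by linarith only [hμr0])
    rw [hz] at hPhile
    linarith only [hPhile, this]
  -- main case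
  set s : ℝ := Real.sqrt ((m₁ - m₁')^2/σ₁^2 + (m₂ - m₂')^2/σ₂^2) with hsdef
  have hspos : 0 < s := by
    rw [hsdef]
    apply Real.sqrt_pos.mpr
    rcases not_and_or.mp hc with h | h
    · have h1 : (0:ℝ) < (m₁ - m₁')^2/σ₁^2 := by
        have : m₁ - m₁' ≠ 0 := sub_ne_zero.mpr (Ne.symm h)
        positivity
      have h2 : (0:ℝ) ≤ (m₂ - m₂')^2/σ₂^2 := by positivity
      linarith only [h1, h2]
    · have h1 : (0:ℝ) < (m₂ - m₂')^2/σ₂^2 := by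
        have : m₂ - m₂' ≠ 0 := sub_ne_zero.mpr (Ne.symm h)
        positivity
      have h2 : (0:ℝ) ≤ (m₁ - m₁')^2/σ₁^2 := by positivity
      linarith only [h1, h2]
  set a₁ : ℝ := (m₁' - m₁)/σ₁^2 with ha₁def
  set a₂ : ℝ := (m₂' - m₂)/σ₂^2 with ha₂def
  set β : ℝ := (m₁^2 - m₁'^2)/(2*σ₁^2) + (m₂^2 - m₂'^2)/(2*σ₂^2) with hβdef
  have hℓeq : ∀ ω : ℝ × ℝ, ℓ ω = a₁ * ω.1 + a₂ * ω.2 + β := by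
    intro ω
    rw [hℓdef]
    simp only
    rw [hv₁c, hv₂c, ha₁def, ha₂def, hβdef]
    field_simp
    ring
  have hs2 : s^2 = a₁^2*σ₁^2 + a₂^2*σ₂^2 := by
    rw [hsdef, Real.sq_sqrt (by positivity), ha₁def, ha₂def]
    field_simp
    ring
  set Vnn : ℝ≥0 := ⟨a₁^2, sq_nonneg _⟩ * v₁ + ⟨a₂^2, sq_nonneg _⟩ * v₂ with hVdef
  have hVc : (Vnn:ℝ) = a₁^2*σ₁^2 + a₂^2*σ₂^2 := by
    rw [hVdef]
    push_cast
    show (a₁^2 : ℝ) * (v₁:ℝ) + a₂^2 * (v₂:ℝ) = _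
    rw [hv₁c, hv₂c]
  have hVpos : (0:ℝ) < (Vnn:ℝ) := by rw [hVc, ← hs2]; positivity
  have hVnn0 : Vnn ≠ 0 := by
    intro h
    rw [h] at hVpos
    simp at hVpos
  have hsV : Real.sqrt (Vnn:ℝ) = s := by rw [hVc, ← hs2, Real.sqrt_sq hspos.le]
  set meanP : ℝ := a₁ * m₁ + a₂ * m₂ with hmeanPdef
  set meanQ : ℝ := a₁ * m₁' + a₂ * m₂' with hmeanQdef
  have hmeanQP : meanQ = meanP + s^2 := by
    rw [hmeanQdef, hmeanPdef, hs2, ha₁def, ha₂def]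
    field_simp
    ring
  set t : ℝ := meanP + s * z with htdef
  set L : ℝ × ℝ → ℝ := fun p => a₁ * p.1 + a₂ * p.2 with hLdef
  have hLmeas : Measurable L :=
    (measurable_const.mul measurable_fst).add (measurable_const.mul measurable_snd)
  set A : Set (ℝ × ℝ) := L ⁻¹' (Ioi t) with hAdef
  have hA : MeasurableSet A := hLmeas measurableSet_Ioi
  have hPA : (P A).toReal = α := by
    have h1 : P A = (P.map L) (Ioi t) := by
      rw [Measure.map_apply hLmeas measurableSet_Ioi]
    rw [h1, hPdef, hLdef, gaussian_linear m₁ m₂ v₁ v₂ a₁ a₂, gaussianReal_Ioi _ _ hVnn0,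
      hsV]
    have : (t - (a₁ * m₁ + a₂ * m₂)) / s = z := by
      rw [htdef, hmeanPdef]
      field_simp
      ring
    rw [this, hz]
    ring
  have hQA : (Q A).toReal = 1 - Phi (z - s) := by
    have h1 : Q A = (Q.map L) (Ioi t) := by
      rw [Measure.map_apply hLmeas measurableSet_Ioi]
    rw [h1, hQdef, hLdef, gaussian_linear m₁' m₂' v₁ v₂ a₁ a₂, gaussianReal_Ioi _ _ hVnn0,
      hsV]
    have : (t - (a₁ * m₁' + a₂ * m₂')) / s = z - s := by
      have : a₁ * m₁' + a₂ * m₂' = meanP + s^2 := by rw [← hmeanQdef]; exact hmeanQP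
      rw [this, htdef]
      field_simp
      ring
    rw [this]
  -- Neyman-Pearson argument
  set ind : (ℝ × ℝ) → ℝ := A.indicator 1 with hinddef
  have hindmeas : Measurable ind := measurable_one.indicator hA
  have hind01 : ∀ ω, ind ω ∈ Icc (0:ℝ) 1 := by
    intro ω
    rw [hinddef]
    by_cases hω : ω ∈ A <;> simp [Set.indicator, hω] <;> norm_num
  have hindP : ∫ ω, ind ω ∂P = α := by
    rw [hinddef]
    exact (integral_indicator_one (μ := P) hA).trans (by rw [measureReal_def, hPA])
  have hindQexp : ∫ ω, rexp (ℓ ω) * ind ω ∂P = 1 - Phi (z - s) := by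
    rw [← hQgen ind, hinddef]
    exact (integral_indicator_one (μ := Q) hA).trans (by rw [measureReal_def, hQA])
  set c : ℝ := rexp (t + β) with hcdef
  have hcpos : 0 < c := Real.exp_pos _
  have hkey : ∀ ω, rexp (ℓ ω) * φ ω + c * ind ω ≤ rexp (ℓ ω) * ind ω + c * φ ω := by
    intro ω
    by_cases hω : ω ∈ A
    · have hLω : t < L ω := hω
      have h1 : c ≤ rexp (ℓ ω) := by
        rw [hcdef, hℓeq ω]
        apply Real.exp_le_exp.mpr
        rw [hLdef] at hLω
        simp only at hLω
        linarith only [hLω]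
      have hind1 : ind ω = 1 := by rw [hinddef]; simp [Set.indicator, hω]
      rw [hind1]
      have hmul : (0:ℝ) ≤ (rexp (ℓ ω) - c) * (1 - φ ω) :=
        mul_nonneg (sub_nonneg.mpr h1) (sub_nonneg.mpr (hφ01 ω).2)
      have hexpand : (rexp (ℓ ω) - c) * (1 - φ ω)
          = rexp (ℓ ω) - c - rexp (ℓ ω) * φ ω + c * φ ω := by ring
      linarith only [hmul, hexpand]
    · have hLω : L ω ≤ t := not_lt.mp hω
      have h1 : rexp (ℓ ω) ≤ c := by
        rw [hcdef, hℓeq ω]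
        apply Real.exp_le_exp.mpr
        rw [hLdef] at hLω
        simp only at hLω
        linarith only [hLω]
      have hind0 : ind ω = 0 := by rw [hinddef]; simp [Set.indicator, hω]
      rw [hind0]
      have := mul_le_mul_of_nonneg_right h1 (hφ01 ω).1
      linarith only [this]
  have hNP : ∫ ω, φ ω ∂Q + c * α ≤ (1 - Phi (z - s)) + c * ∫ ω, φ ω ∂P := by
    have hint1 : Integrable (fun ω => rexp (ℓ ω) * φ ω + c * ind ω) P :=
      (intExpBdd φ hφm hφ01).add ((int01 ind hindmeas hind01 P (by infer_instance)).const_mul c)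
    have hint2 : Integrable (fun ω => rexp (ℓ ω) * ind ω + c * φ ω) P :=
      (intExpBdd ind hindmeas hind01).add (intφP.const_mul c)
    have := integral_mono hint1 hint2 hkey
    rw [integral_add (intExpBdd φ hφm hφ01)
        ((int01 ind hindmeas hind01 P (by infer_instance)).const_mul c),
      integral_add (intExpBdd ind hindmeas hind01) (intφP.const_mul c),
      integral_const_mul, integral_const_mul, hindP, hindQexp, ← hQgen φ] at this
    exact this
  have hfin : ∫ ω, φ ω ∂Q ≤ 1 - Phi (z - s) := by
    have hmul : c * ∫ ω, φ ω ∂P ≤ c * α := mul_le_mul_of_nonneg_left hφP hcpos.le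
    linarith only [hNP, hmul]
  have hPhile : Phi (z - μr) ≤ Phi (z - s) := by
    apply Phi_mono
    have hsle : s ≤ μr := by
      rw [hsdef, hμrdef]
      apply Real.sqrt_le_sqrt
      have e1 : (Δ₁ / σ₁)^2 = Δ₁^2/σ₁^2 := by rw [div_pow]
      have e2 : (Δ₂ / σ₂)^2 = Δ₂^2/σ₂^2 := by rw [div_pow]
      rw [e1, e2]
      have b₁ := abs_le.mp (h₁ x x' hxx')
      have b₂ := abs_le.mp (h₂ x x' hxx')
      have q1 : (m₁ - m₁')^2 ≤ Δ₁^2 := sq_le_sq' b₁.1 b₁.2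
      have q2 : (m₂ - m₂')^2 ≤ Δ₂^2 := sq_le_sq' b₂.1 b₂.2
      have : (m₁ - m₁')^2/σ₁^2 ≤ Δ₁^2/σ₁^2 := by
        apply div_le_div_of_nonneg_right q1 (by positivity) |>.trans_eq rfl
      gcongr
    linarith only [hsle]
  linarith only [hfin, hPhile]
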